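/- arXiv:2408.05071 — 2 statements merged into one kernel-verified Lean document; each statement's English description precedes it below -/
import Mathlib

section
/- Let $(X_t)_{t\in\mathbb{Z}}$ be a stationary, mean-zero Hilbert-space-valued process satisfying $\mathbb{E}\|\sum_{i=1}^n X_i\|^2 = O(n)$, and suppose a change-point model $Y_i = X_i + n^{-r}\mu\mathbf{1}\{i > k^*\}$ holds with $r > 0$ and $k^* = \lfloor nt^*\rfloor$, $t^* \in (0,1)$. Then the sample covariance operators satisfy $\mathbb{E}\|\hat C_{0,Y} - \hat C_{0,X}\|_{HS}^2 = O(n^{-\min\{4r,\,1+2r\}})$, where $\hat C_{0,Z} = n^{-1}\sum_{i=1}^n (Z_i - \bar Z)\otimes(Z_i - \bar Z)$. -/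
/-!
Shifting the observations with index `i > k` by `δ = n^{-r} μ` moves each centred observation by
`c i • δ`, where `c` is the centred indicator of `i > k`. Since `∑ c i = 0` the cross terms
collapse to `Ĉ_Y - Ĉ_X = n⁻¹ (v ⊗ δ + δ ⊗ v + (∑ c i ^ 2) δ ⊗ δ)` with `v = ∑ c i • X i`, and
`|c i| ≤ 1` bounds its squared norm by `8 ‖δ‖² ‖v‖² / n² + 2 ‖δ‖⁴`. In partial sums,
`v = (S_n - S_k) - p S_n` with `p ∈ [0, 1]` the proportion of shifted indices, so
`𝔼‖v‖² = O(n)` by the moment assumption, which leaves `O(n^{-(1+2r)} + n^{-4r})`.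
-/

open MeasureTheory Finset RealInnerProductSpace

section SampleCovariance

variable {ι M E M' : Type*} [AddCommGroup M] [Module ℝ M] [AddCommGroup E] [Module ℝ E]
  [SeminormedAddCommGroup M'] [NormedSpace ℝ M']

noncomputable def centered (s : Finset ι) (x : ι → M) (i : ι) : M :=
  x i - (#s : ℝ)⁻¹ • ∑ j ∈ s, x j

noncomputable def sampleCov (tens : M →ₗ[ℝ] M →ₗ[ℝ] E) (s : Finset ι) (x : ι → M) : E :=
  (#s : ℝ)⁻¹ • ∑ i ∈ s, tens (centered s x i) (centered s x i)

theorem sum_centered (s : Finset ι) (x : ι → M) : ∑ i ∈ s, centered s x i = 0 := by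
  rcases s.eq_empty_or_nonempty with rfl | hs
  · simp
  have hcard : (#s : ℝ) ≠ 0 := Nat.cast_ne_zero.2 hs.card_pos.ne'
  simp only [centered, sum_sub_distrib, sum_const, ← Nat.cast_smul_eq_nsmul ℝ, smul_smul,
    mul_inv_cancel₀ hcard, one_smul, sub_self]

theorem centered_add_smul (s : Finset ι) (x : ι → M) (a : ι → ℝ) (δ : M) (i : ι) :
    centered s (fun j => x j + a j • δ) i = centered s x i + centered s a i • δ := by
  simp only [centered, sum_add_distrib, ← sum_smul, smul_add, sub_smul, smul_eq_mul, mul_smul]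
  abel

theorem sum_centered_smul_centered (s : Finset ι) (a : ι → ℝ) (x : ι → M) :
    ∑ i ∈ s, centered s a i • centered s x i = ∑ i ∈ s, centered s a i • x i := by
  calc ∑ i ∈ s, centered s a i • centered s x i
      = ∑ i ∈ s, centered s a i • x i
          - (∑ i ∈ s, centered s a i) • ((#s : ℝ)⁻¹ • ∑ j ∈ s, x j) := by
        rw [sum_smul, ← sum_sub_distrib]
        exact sum_congr rfl fun i _ => smul_sub _ _ _
    _ = ∑ i ∈ s, centered s a i • x i := by rw [sum_centered, zero_smul, sub_zero]

theorem sampleCov_add_smul_sub (tens : M →ₗ[ℝ] M →ₗ[ℝ] E) (s : Finset ι) (x : ι → M)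
    (a : ι → ℝ) (δ : M) :
    sampleCov tens s (fun j => x j + a j • δ) - sampleCov tens s x =
      (#s : ℝ)⁻¹ • (tens (∑ i ∈ s, centered s a i • x i) δ
        + tens δ (∑ i ∈ s, centered s a i • x i)
        + (∑ i ∈ s, centered s a i ^ 2) • tens δ δ) := by
  have hexpand : ∀ (v : M) (c : ℝ), tens (v + c • δ) (v + c • δ) =
      tens v v + (tens (c • v) δ + tens δ (c • v) + c ^ 2 • tens δ δ) := by
    intro v c
    simp only [map_add, map_smul, LinearMap.add_apply, LinearMap.smul_apply]
    module
  simp only [sampleCov, centered_add_smul, hexpand, sum_add_distrib, smul_add,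
    add_sub_cancel_left, ← map_sum, ← LinearMap.sum_apply, ← sum_smul,
    sum_centered_smul_centered]

theorem inv_card_mul_sum_mem_Icc {s : Finset ι} {a : ι → ℝ}
    (ha : ∀ i ∈ s, a i ∈ Set.Icc (0 : ℝ) 1) :
    (#s : ℝ)⁻¹ * ∑ i ∈ s, a i ∈ Set.Icc (0 : ℝ) 1 := by
  refine ⟨mul_nonneg (by positivity) (sum_nonneg fun i hi => (ha i hi).1), ?_⟩
  refine inv_mul_le_one_of_le₀ ?_ (Nat.cast_nonneg _)
  simpa using sum_le_sum fun i hi => (ha i hi).2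

theorem abs_centered_le_one {s : Finset ι} {a : ι → ℝ} (ha : ∀ i ∈ s, a i ∈ Set.Icc (0 : ℝ) 1)
    {i : ι} (hi : i ∈ s) : |centered s a i| ≤ 1 := by
  have hmean := inv_card_mul_sum_mem_Icc ha
  rw [centered, smul_eq_mul, abs_sub_le_iff]
  constructor <;> linarith [(ha i hi).1, (ha i hi).2, hmean.1, hmean.2]

theorem norm_sum_centered_smul_le {s : Finset ι} {a : ι → ℝ}
    (ha : ∀ i ∈ s, a i ∈ Set.Icc (0 : ℝ) 1) (x : ι → M') :
    ‖∑ i ∈ s, centered s a i • x i‖ ≤ ‖∑ i ∈ s, a i • x i‖ + ‖∑ i ∈ s, x i‖ := by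
  have hmean := inv_card_mul_sum_mem_Icc ha
  have hsum : ∑ i ∈ s, centered s a i • x i
      = ∑ i ∈ s, a i • x i - ((#s : ℝ)⁻¹ * ∑ j ∈ s, a j) • ∑ i ∈ s, x i := by
    simp only [centered, smul_eq_mul, sub_smul, sum_sub_distrib, smul_sum]
  calc ‖∑ i ∈ s, centered s a i • x i‖
      ≤ ‖∑ i ∈ s, a i • x i‖ + |(#s : ℝ)⁻¹ * ∑ j ∈ s, a j| * ‖∑ i ∈ s, x i‖ := by
        rw [hsum, ← Real.norm_eq_abs, ← norm_smul]; exact norm_sub_le _ _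
    _ ≤ ‖∑ i ∈ s, a i • x i‖ + ‖∑ i ∈ s, x i‖ := by
        rw [abs_of_nonneg hmean.1]
        gcongr
        exact mul_le_of_le_one_left (norm_nonneg _) hmean.2

theorem ite_one_zero_mem_Icc (p : Prop) [Decidable p] :
    (if p then (1 : ℝ) else 0) ∈ Set.Icc (0 : ℝ) 1 := by
  split_ifs <;> simp

theorem sum_Icc_ite_lt_smul (k n : ℕ) (f : ℕ → M) :
    ∑ i ∈ Icc 1 n, (if k < i then (1 : ℝ) else 0) • f i
      = ∑ i ∈ Icc 1 n, f i - ∑ i ∈ Icc 1 (min k n), f i := by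
  have hfilter : (Icc 1 n).filter (fun i => ¬k < i) = Icc 1 (min k n) := by
    ext i
    simp only [mem_filter, mem_Icc, not_lt, le_min_iff]
    omega
  rw [eq_sub_iff_add_eq, ← hfilter]
  simp only [ite_smul, one_smul, zero_smul, ← sum_filter]
  exact sum_filter_add_sum_filter_not _ _ _

end SampleCovariance

theorem norm_tens_eq {H E : Type*} [NormedAddCommGroup H] [InnerProductSpace ℝ H]
    [NormedAddCommGroup E] [InnerProductSpace ℝ E] {tens : H →ₗ[ℝ] H →ₗ[ℝ] E}
    (htens : ∀ a b c d : H, ⟪tens a b, tens c d⟫ = ⟪a, c⟫ * ⟪b, d⟫) (a b : H) :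
    ‖tens a b‖ = ‖a‖ * ‖b‖ := by
  have hsq : ‖tens a b‖ ^ 2 = (‖a‖ * ‖b‖) ^ 2 := by
    rw [← real_inner_self_eq_norm_sq, htens, real_inner_self_eq_norm_sq,
      real_inner_self_eq_norm_sq, mul_pow]
  exact (pow_left_inj₀ (norm_nonneg _) (by positivity) two_ne_zero).1 hsq

theorem norm_sq_sampleCov_add_smul_sub_le {ι H E : Type*} [NormedAddCommGroup H]
    [InnerProductSpace ℝ H] [NormedAddCommGroup E] [InnerProductSpace ℝ E]
    {tens : H →ₗ[ℝ] H →ₗ[ℝ] E}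
    (htens : ∀ a b c d : H, ⟪tens a b, tens c d⟫ = ⟪a, c⟫ * ⟪b, d⟫)
    {s : Finset ι} {a : ι → ℝ} (ha : ∀ i ∈ s, a i ∈ Set.Icc (0 : ℝ) 1) (x : ι → H) (δ : H) :
    ‖sampleCov tens s (fun j => x j + a j • δ) - sampleCov tens s x‖ ^ 2
      ≤ 8 * (‖δ‖ / #s) ^ 2 * ‖∑ i ∈ s, centered s a i • x i‖ ^ 2 + 2 * ‖δ‖ ^ 4 := by
  rcases s.eq_empty_or_nonempty with rfl | hs
  · simp [sampleCov]
  have hcard : (0 : ℝ) < #s := Nat.cast_pos.2 hs.card_pos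
  set v := ∑ i ∈ s, centered s a i • x i
  have hvar : ∑ i ∈ s, centered s a i ^ 2 ≤ #s := by
    simpa using sum_le_sum fun i hi => (sq_le_one_iff_abs_le_one _).2 (abs_centered_le_one ha hi)
  have hnorm : ‖sampleCov tens s (fun j => x j + a j • δ) - sampleCov tens s x‖
      ≤ 2 * (‖δ‖ / #s) * ‖v‖ + ‖δ‖ ^ 2 := by
    rw [sampleCov_add_smul_sub, norm_smul, norm_inv, Real.norm_natCast]
    calc (#s : ℝ)⁻¹ * ‖tens v δ + tens δ v + (∑ i ∈ s, centered s a i ^ 2) • tens δ δ‖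
        ≤ (#s : ℝ)⁻¹ * (‖v‖ * ‖δ‖ + ‖δ‖ * ‖v‖ + (∑ i ∈ s, centered s a i ^ 2) * ‖δ‖ ^ 2) := by
          gcongr
          refine (norm_add₃_le ..).trans_eq ?_
          rw [norm_smul, Real.norm_of_nonneg (sum_nonneg fun i _ => sq_nonneg _),
            norm_tens_eq htens, norm_tens_eq htens, norm_tens_eq htens, sq]
      _ ≤ (#s : ℝ)⁻¹ * (‖v‖ * ‖δ‖ + ‖δ‖ * ‖v‖ + #s * ‖δ‖ ^ 2) := by gcongr
      _ = 2 * (‖δ‖ / #s) * ‖v‖ + ‖δ‖ ^ 2 := by field_simp; ring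
  calc _ ≤ (2 * (‖δ‖ / #s) * ‖v‖ + ‖δ‖ ^ 2) ^ 2 := by gcongr
    _ ≤ 2 * ((2 * (‖δ‖ / #s) * ‖v‖) ^ 2 + (‖δ‖ ^ 2) ^ 2) := add_sq_le
    _ = _ := by ring

theorem integral_norm_sq_sum_centered_indicator_smul_le {Ω H : Type*} [MeasurableSpace Ω]
    {P : Measure Ω} [NormedAddCommGroup H] [NormedSpace ℝ H] {X : ℕ → Ω → H}
    (hX : ∀ i, MemLp (X i) 2 P) (k n : ℕ) {B : ℝ}
    (hS : ∀ m ≤ n, ∫ ω, ‖∑ i ∈ Icc 1 m, X i ω‖ ^ 2 ∂P ≤ B) :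
    ∫ ω, ‖∑ i ∈ Icc 1 n, centered (Icc 1 n) (fun i => if k < i then (1 : ℝ) else 0) i • X i ω‖ ^ 2
      ∂P ≤ 10 * B := by
  set S : ℕ → Ω → H := fun m ω => ∑ i ∈ Icc 1 m, X i ω
  have hSint : ∀ m, Integrable (fun ω => ‖S m ω‖ ^ 2) P :=
    fun m => (memLp_finsetSum _ fun i _ => hX i).norm.integrable_sq
  have hpt : ∀ ω, ‖∑ i ∈ Icc 1 n,
      centered (Icc 1 n) (fun i => if k < i then (1 : ℝ) else 0) i • X i ω‖ ^ 2
        ≤ 2 * ‖S (min k n) ω‖ ^ 2 + 8 * ‖S n ω‖ ^ 2 := by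
    intro ω
    have h := norm_sum_centered_smul_le (s := Icc 1 n) (fun i _ => ite_one_zero_mem_Icc (k < i))
      (fun i => X i ω)
    rw [sum_Icc_ite_lt_smul] at h
    have h' : ‖S n ω - S (min k n) ω‖ ≤ ‖S n ω‖ + ‖S (min k n) ω‖ := norm_sub_le _ _
    calc _ ≤ (‖S (min k n) ω‖ + 2 * ‖S n ω‖) ^ 2 := by gcongr; linarith
      _ ≤ 2 * (‖S (min k n) ω‖ ^ 2 + (2 * ‖S n ω‖) ^ 2) := add_sq_le
      _ = 2 * ‖S (min k n) ω‖ ^ 2 + 8 * ‖S n ω‖ ^ 2 := by ring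
  calc _ ≤ ∫ ω, 2 * ‖S (min k n) ω‖ ^ 2 + 8 * ‖S n ω‖ ^ 2 ∂P :=
        integral_mono_of_nonneg (ae_of_all _ fun ω => by positivity)
          (((hSint _).const_mul 2).add ((hSint n).const_mul 8)) (ae_of_all _ hpt)
    _ = 2 * ∫ ω, ‖S (min k n) ω‖ ^ 2 ∂P + 8 * ∫ ω, ‖S n ω‖ ^ 2 ∂P := by
        rw [integral_add ((hSint _).const_mul 2) ((hSint n).const_mul 8), integral_const_mul,
          integral_const_mul]
    _ ≤ 10 * B := by linarith [hS _ (min_le_right k n), hS n le_rfl]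

theorem integral_norm_sq_sum_Icc_le_of_le {Ω H : Type*} [MeasurableSpace Ω] {P : Measure Ω}
    [NormedAddCommGroup H] {X : ℕ → Ω → H} {C : ℝ} (hC : 0 ≤ C)
    (hmom : ∀ n : ℕ, 1 ≤ n → ∫ ω, ‖∑ i ∈ Icc 1 n, X i ω‖ ^ 2 ∂P ≤ C * n) {m n : ℕ} (hmn : m ≤ n) :
    ∫ ω, ‖∑ i ∈ Icc 1 m, X i ω‖ ^ 2 ∂P ≤ C * n := by
  rcases m.eq_zero_or_pos with rfl | hm
  · simpa using mul_nonneg hC n.cast_nonneg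
  · exact (hmom m hm).trans (by gcongr)

theorem integral_norm_sq_le_of_norm_sq_le {Ω F G : Type*} [MeasurableSpace Ω] {P : Measure Ω}
    [IsProbabilityMeasure P] [NormedAddCommGroup F] [NormedAddCommGroup G] {f : Ω → F}
    {g : Ω → G} (hg : MemLp g 2 P) {α β : ℝ} (hfg : ∀ ω, ‖f ω‖ ^ 2 ≤ α * ‖g ω‖ ^ 2 + β) :
    ∫ ω, ‖f ω‖ ^ 2 ∂P ≤ α * ∫ ω, ‖g ω‖ ^ 2 ∂P + β := by
  have hint := hg.norm.integrable_sq.const_mul α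
  calc _ ≤ ∫ ω, α * ‖g ω‖ ^ 2 + β ∂P :=
        integral_mono_of_nonneg (ae_of_all _ fun ω => by positivity)
          (hint.add (integrable_const β)) (ae_of_all _ hfg)
    _ = α * ∫ ω, ‖g ω‖ ^ 2 ∂P + β := by
        rw [integral_add hint (integrable_const β), integral_const_mul]
        simp

theorem mul_rpow_neg_sq_div_add_mul_rpow_neg_pow_four_le {x A B : ℝ} (hx : 1 ≤ x) (hA : 0 ≤ A)
    (hB : 0 ≤ B) (r : ℝ) :
    A * (x ^ (-r)) ^ 2 / x + B * (x ^ (-r)) ^ 4 ≤ (A + B) * x ^ (-min (4 * r) (1 + 2 * r)) := by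
  have hx0 : 0 ≤ x := zero_le_one.trans hx
  have hsq : (x ^ (-r)) ^ 2 / x = x ^ (-(1 + 2 * r)) := by
    rw [← Real.rpow_mul_natCast hx0, ← Real.rpow_sub_one (by positivity)]
    ring_nf
  have hfour : (x ^ (-r)) ^ 4 = x ^ (-(4 * r)) := by
    rw [← Real.rpow_mul_natCast hx0]
    ring_nf
  rw [mul_div_assoc, hsq, hfour, add_mul]
  gcongr
  exacts [min_le_right _ _, min_le_left _ _]

/-- `E` stands for the Hilbert–Schmidt operators on `H`, and `tens a b` for the rank-one
operator `a ⊗ b`. -/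
theorem sample_covariance_perturbation_general
    {Ω : Type*} [MeasurableSpace Ω] (P : Measure Ω) [IsProbabilityMeasure P]
    {H : Type*} [NormedAddCommGroup H] [InnerProductSpace ℝ H]
    {E : Type*} [NormedAddCommGroup E] [InnerProductSpace ℝ E]
    (tens : H →ₗ[ℝ] H →ₗ[ℝ] E)
    (htens : ∀ a b c d : H, ⟪tens a b, tens c d⟫ = ⟪a, c⟫ * ⟪b, d⟫)
    (X : ℕ → Ω → H)
    (hXL2 : ∀ i, MemLp (X i) 2 P)
    (Cmom : ℝ)
    (hmom : ∀ n : ℕ, 1 ≤ n →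
      (∫ ω, ‖∑ i ∈ Finset.Icc 1 n, X i ω‖ ^ 2 ∂P) ≤ Cmom * n)
    (ts : ℝ) (r : ℝ) (μvec : H)
    (Y : ℕ → ℕ → Ω → H)
    (hY : ∀ n i ω, Y n i ω = X i ω +
      (if Nat.floor ((n : ℝ) * ts) < i then ((n : ℝ) ^ (-r)) • μvec else 0))
    (CX CY : ℕ → Ω → E)
    (hCX : ∀ n ω, CX n ω = ((n : ℝ)⁻¹) • ∑ i ∈ Finset.Icc 1 n,
      tens (X i ω - ((n : ℝ)⁻¹) • ∑ j ∈ Finset.Icc 1 n, X j ω)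
           (X i ω - ((n : ℝ)⁻¹) • ∑ j ∈ Finset.Icc 1 n, X j ω))
    (hCY : ∀ n ω, CY n ω = ((n : ℝ)⁻¹) • ∑ i ∈ Finset.Icc 1 n,
      tens (Y n i ω - ((n : ℝ)⁻¹) • ∑ j ∈ Finset.Icc 1 n, Y n j ω)
           (Y n i ω - ((n : ℝ)⁻¹) • ∑ j ∈ Finset.Icc 1 n, Y n j ω)) :
    ∃ C : ℝ, ∀ n : ℕ, 1 ≤ n →
      (∫ ω, ‖CY n ω - CX n ω‖ ^ 2 ∂P) ≤
        C * (n : ℝ) ^ (-(min (4 * r) (1 + 2 * r))) := by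
  have hCmom : 0 ≤ Cmom := by
    simpa using (integral_nonneg fun ω => by positivity).trans (hmom 1 le_rfl)
  refine ⟨80 * Cmom * ‖μvec‖ ^ 2 + 2 * ‖μvec‖ ^ 4, fun n hn => ?_⟩
  have hn1 : (1 : ℝ) ≤ n := by exact_mod_cast hn
  set a : ℕ → ℝ := fun i => if ⌊(n : ℝ) * ts⌋₊ < i then 1 else 0
  set δ : H := (n : ℝ) ^ (-r) • μvec
  set v : Ω → H := fun ω => ∑ i ∈ Icc 1 n, centered (Icc 1 n) a i • X i ω
  have hcard : (#(Icc 1 n) : ℝ) = n := by simp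
  have hpt : ∀ ω, ‖CY n ω - CX n ω‖ ^ 2 ≤ 8 * (‖δ‖ / n) ^ 2 * ‖v ω‖ ^ 2 + 2 * ‖δ‖ ^ 4 := by
    intro ω
    have hYa : ∀ i, Y n i ω = X i ω + a i • δ := fun i => by
      rw [hY]; simp only [a, δ, ite_smul, one_smul, zero_smul]
    have hdiff : CY n ω - CX n ω = sampleCov tens (Icc 1 n) (fun i => X i ω + a i • δ)
        - sampleCov tens (Icc 1 n) (fun i => X i ω) := by
      simp only [hCY, hCX, hYa, sampleCov, centered, hcard]
    rw [hdiff, ← hcard]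
    exact norm_sq_sampleCov_add_smul_sub_le htens
      (fun i _ => ite_one_zero_mem_Icc (⌊(n : ℝ) * ts⌋₊ < i)) _ δ
  have hv : ∫ ω, ‖v ω‖ ^ 2 ∂P ≤ 10 * (Cmom * n) :=
    integral_norm_sq_sum_centered_indicator_smul_le hXL2 _ n fun m hm =>
      integral_norm_sq_sum_Icc_le_of_le hCmom hmom hm
  have hvmem : MemLp v 2 P := memLp_finsetSum _ fun i _ => (hXL2 i).const_smul _
  calc ∫ ω, ‖CY n ω - CX n ω‖ ^ 2 ∂P
      ≤ 8 * (‖δ‖ / n) ^ 2 * ∫ ω, ‖v ω‖ ^ 2 ∂P + 2 * ‖δ‖ ^ 4 :=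
        integral_norm_sq_le_of_norm_sq_le hvmem hpt
    _ ≤ 8 * (‖δ‖ / n) ^ 2 * (10 * (Cmom * n)) + 2 * ‖δ‖ ^ 4 := by gcongr
    _ = 80 * Cmom * ‖μvec‖ ^ 2 * ((n : ℝ) ^ (-r)) ^ 2 / n
          + 2 * ‖μvec‖ ^ 4 * ((n : ℝ) ^ (-r)) ^ 4 := by
        rw [norm_smul, Real.norm_of_nonneg (by positivity)]
        field_simp
        ring
    _ ≤ _ := mul_rpow_neg_sq_div_add_mul_rpow_neg_pow_four_le hn1 (by positivity) (by positivity) r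

/-- Covariance perturbation under local alternatives (Lemma 5 of the paper).
`X` is a stationary mean-zero Hilbert-space-valued process with
`𝔼‖∑_{i=1}^n X_i‖² = O(n)`, and `Y_i = X_i + n^{−r} μ 𝟙{i > k*}` with
`k* = ⌊n t*⌋`.  The space `E` models the Hilbert–Schmidt operators on `H`,
with `tens a b` the rank-one tensor `a ⊗ b`
(so `⟪a⊗b, c⊗d⟫_{HS} = ⟪a,c⟫⟪b,d⟫`), and `CX n, CY n` are the sample
covariance operators of `X₁,…,X_n` resp. `Y₁,…,Y_n`.  Then
`𝔼‖Ĉ_{0,Y} − Ĉ_{0,X}‖²_{HS} = O(n^{−min{4r, 1+2r}})`. -/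
theorem sample_covariance_perturbation
    {Ω : Type*} [MeasurableSpace Ω] (P : Measure Ω) [IsProbabilityMeasure P]
    {H : Type*} [NormedAddCommGroup H] [InnerProductSpace ℝ H] [CompleteSpace H]
    [MeasurableSpace H] [BorelSpace H]
    {E : Type*} [NormedAddCommGroup E] [InnerProductSpace ℝ E]
    (tens : H →ₗ[ℝ] H →ₗ[ℝ] E)
    (htens : ∀ a b c d : H, ⟪tens a b, tens c d⟫ = ⟪a, c⟫ * ⟪b, d⟫)
    (X : ℕ → Ω → H)
    (hXmeas : ∀ i, Measurable (X i))
    (hXL2 : ∀ i, MemLp (X i) 2 P)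
    (hXmean : ∀ i, (∫ ω, X i ω ∂P) = 0)
    (Cmom : ℝ)
    (hmom : ∀ n : ℕ, 1 ≤ n →
      (∫ ω, ‖∑ i ∈ Finset.Icc 1 n, X i ω‖ ^ 2 ∂P) ≤ Cmom * n)
    (ts : ℝ) (hts : ts ∈ Set.Ioo (0 : ℝ) 1) (r : ℝ) (hr : 0 < r) (μvec : H)
    (Y : ℕ → ℕ → Ω → H)
    (hY : ∀ n i ω, Y n i ω = X i ω +
      (if Nat.floor ((n : ℝ) * ts) < i then ((n : ℝ) ^ (-r)) • μvec else 0))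
    (CX CY : ℕ → Ω → E)
    (hCX : ∀ n ω, CX n ω = ((n : ℝ)⁻¹) • ∑ i ∈ Finset.Icc 1 n,
      tens (X i ω - ((n : ℝ)⁻¹) • ∑ j ∈ Finset.Icc 1 n, X j ω)
           (X i ω - ((n : ℝ)⁻¹) • ∑ j ∈ Finset.Icc 1 n, X j ω))
    (hCY : ∀ n ω, CY n ω = ((n : ℝ)⁻¹) • ∑ i ∈ Finset.Icc 1 n,
      tens (Y n i ω - ((n : ℝ)⁻¹) • ∑ j ∈ Finset.Icc 1 n, Y n j ω)
           (Y n i ω - ((n : ℝ)⁻¹) • ∑ j ∈ Finset.Icc 1 n, Y n j ω)) :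
    ∃ C : ℝ, ∀ n : ℕ, 1 ≤ n →
      (∫ ω, ‖CY n ω - CX n ω‖ ^ 2 ∂P) ≤
        C * (n : ℝ) ^ (-(min (4 * r) (1 + 2 * r))) :=
  sample_covariance_perturbation_general P tens htens X hXL2 Cmom hmom ts r μvec Y hY CX CY hCX hCY
end

section
/- Let $\xi_{l,s}$, $l \in \mathbb{N}$, $s \in \mathbb{Z}$, be real-valued random variables with autocovariances $\gamma_{l_1,l_2}(h) = \operatorname{Cov}(\xi_{l_1,0},\xi_{l_2,h})$ and summable fourth-order cumulants. For an orthonormal system $(v_l)$ in a Hilbert space and $m \ge 0$, the fourth moment bound holds: $\frac{1}{n^2}\mathbb{E}\big\|\sum_{s=a+1}^{a+n}\sum_{l=m+1}^\infty \xi_{l,s} v_l\big\|^4 \le \big(\sum_{l=m+1}^\infty\sum_{h\in\mathbb{Z}}|\gamma_l(h)|\big)^2 + 2\sum_{l_1,l_2=m+1}^\infty\big(\sum_{h\in\mathbb{Z}}|\gamma_{l_1,l_2}(h)|\big)^2 + \frac{C}{n}$, where $\gamma_l = \gamma_{l,l}$ and $C = \sum_{l_1,l_2=m+1}^\infty\sum_{s_1,s_2,s_3\in\mathbb{Z}}|cum(\xi_{l_1,0},\xi_{l_1,s_1},\xi_{l_2,s_2},\xi_{l_2,s_3})|$.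 -/
/-!
By Parseval, with block sums `c l = ∑ s, ξ l s`, the fourth power of the norm is
`(∑ l, c l ^ 2) ^ 2 = ∑ (l₁, l₂), c l₁ ^ 2 * c l₂ ^ 2`, so the expectation is a sum over pairs of
tail indices of `𝔼[c l₁ ^ 2 * c l₂ ^ 2]`. Each of these expands into four-point moments, i.e. a
cumulant plus three products of covariances. Each product of covariances factors into two double
sums over time lags, each at most `n ∑ h, |γ h|`; in the cumulant sum only the first time index is
free, giving `n` times the absolute cumulant sum.
-/

open MeasureTheory Finset

section Shifts

variable {G : Type*} [AddCommGroup G]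

lemma sum_abs_comp_sub_le_tsum (T : Finset G) {f : G → ℝ} (hf : Summable fun g => |f g|)
    (x : G) : ∑ t ∈ T, |f (t - x)| ≤ ∑' g, |f g| :=
  calc ∑ t ∈ T, |f (t - x)| = ∑ g ∈ T.map (Equiv.subRight x).toEmbedding, |f g| := by
        rw [sum_map]; rfl
    _ ≤ ∑' g, |f g| := hf.sum_le_tsum _ fun _ _ => abs_nonneg _

lemma abs_sum_sum_comp_sub_le (I : Finset G) {f : G → ℝ} (hf : Summable fun g => |f g|) :
    |∑ s ∈ I, ∑ t ∈ I, f (t - s)| ≤ #I * ∑' g, |f g| :=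
  calc |∑ s ∈ I, ∑ t ∈ I, f (t - s)| ≤ ∑ s ∈ I, ∑ t ∈ I, |f (t - s)| :=
        (abs_sum_le_sum_abs _ _).trans (sum_le_sum fun _ _ => abs_sum_le_sum_abs _ _)
    _ ≤ ∑ _s ∈ I, ∑' g, |f g| := sum_le_sum fun s _ => sum_abs_comp_sub_le_tsum I hf s
    _ = #I * ∑' g, |f g| := by rw [sum_const, nsmul_eq_mul]

lemma quadruple_sum_mul_comp_sub_le (I : Finset G) {f g : G → ℝ}
    (hf : Summable fun t => |f t|) (hg : Summable fun t => |g t|) :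
    ∑ s₁ ∈ I, ∑ s₂ ∈ I, ∑ s₃ ∈ I, ∑ s₄ ∈ I, f (s₂ - s₁) * g (s₄ - s₃) ≤
      (#I * ∑' t, |f t|) * (#I * ∑' t, |g t|) := by
  simp only [← mul_sum, ← sum_mul]
  refine (le_abs_self _).trans ((abs_mul _ _).trans_le ?_)
  exact mul_le_mul (abs_sum_sum_comp_sub_le I hf) (abs_sum_sum_comp_sub_le I hg) (abs_nonneg _)
    (by positivity)

lemma quadruple_sum_comp_sub_le (I : Finset G) {κ : G × G × G → ℝ}
    (hκ : Summable fun u => |κ u|) :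
    ∑ s₁ ∈ I, ∑ s₂ ∈ I, ∑ s₃ ∈ I, ∑ s₄ ∈ I, κ (s₂ - s₁, s₃ - s₁, s₄ - s₁) ≤
      #I * ∑' u, |κ u| := by
  have inner (s₁ : G) :
      |∑ s₂ ∈ I, ∑ s₃ ∈ I, ∑ s₄ ∈ I, κ (s₂ - s₁, s₃ - s₁, s₄ - s₁)| ≤ ∑' u, |κ u| :=
    calc _ ≤ ∑ s₂ ∈ I, ∑ s₃ ∈ I, ∑ s₄ ∈ I, |κ (s₂ - s₁, s₃ - s₁, s₄ - s₁)| :=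
          (abs_sum_le_sum_abs _ _).trans (sum_le_sum fun _ _ => (abs_sum_le_sum_abs _ _).trans
            (sum_le_sum fun _ _ => abs_sum_le_sum_abs _ _))
      _ = ∑ t ∈ I ×ˢ I ×ˢ I, |κ (t - (s₁, s₁, s₁))| := by simp only [sum_product, Prod.mk_sub_mk]
      _ ≤ ∑' u, |κ u| := sum_abs_comp_sub_le_tsum _ hκ _
  calc _ ≤ ∑ s₁ ∈ I, |∑ s₂ ∈ I, ∑ s₃ ∈ I, ∑ s₄ ∈ I, κ (s₂ - s₁, s₃ - s₁, s₄ - s₁)| :=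
        (le_abs_self _).trans (abs_sum_le_sum_abs _ _)
    _ ≤ ∑ _s₁ ∈ I, ∑' u, |κ u| := sum_le_sum fun s₁ _ => inner s₁
    _ = #I * ∑' u, |κ u| := by rw [sum_const, nsmul_eq_mul]

end Shifts

section Moments

variable {Ω : Type*} [MeasurableSpace Ω] {P : Measure Ω}

lemma memLp_two_mul_of_memLp_four {f g : Ω → ℝ} (hf : MemLp f 4 P) (hg : MemLp g 4 P) :
    MemLp (f * g) 2 P :=
  have : ENNReal.HolderTriple 4 4 2 := ⟨by
    rw [← two_mul, show (4 : ENNReal) = 2 * 2 by norm_num, ENNReal.mul_inv (by simp) (by simp),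
      ← mul_assoc, ENNReal.mul_inv_cancel (by simp) (by simp), one_mul]⟩
  hg.mul hf

lemma integrable_mul_mul_mul_of_memLp_four {f₁ f₂ f₃ f₄ : Ω → ℝ} (h₁ : MemLp f₁ 4 P)
    (h₂ : MemLp f₂ 4 P) (h₃ : MemLp f₃ 4 P) (h₄ : MemLp f₄ 4 P) :
    Integrable (fun ω => f₁ ω * f₂ ω * f₃ ω * f₄ ω) P :=
  ((memLp_two_mul_of_memLp_four h₁ h₂).integrable_mul (memLp_two_mul_of_memLp_four h₃ h₄)).congr
    (ae_of_all _ fun _ => (mul_assoc _ _ _).symm)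

lemma integrable_sq_mul_sq_of_memLp_four {f g : Ω → ℝ} (hf : MemLp f 4 P) (hg : MemLp g 4 P) :
    Integrable (fun ω => f ω ^ 2 * g ω ^ 2) P :=
  (integrable_mul_mul_mul_of_memLp_four hf hf hg hg).congr (ae_of_all _ fun _ => by ring)

lemma integral_sq_sum_mul_sq_sum {σ : Type*} {X Y : σ → Ω → ℝ} (hX : ∀ s, MemLp (X s) 4 P)
    (hY : ∀ s, MemLp (Y s) 4 P) (I : Finset σ) :
    ∫ ω, (∑ s ∈ I, X s ω) ^ 2 * (∑ s ∈ I, Y s ω) ^ 2 ∂P =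
      ∑ s₁ ∈ I, ∑ s₂ ∈ I, ∑ s₃ ∈ I, ∑ s₄ ∈ I, ∫ ω, X s₁ ω * X s₂ ω * Y s₃ ω * Y s₄ ω ∂P := by
  have hint (s₁ s₂ s₃ s₄ : σ) :=
    integrable_mul_mul_mul_of_memLp_four (hX s₁) (hX s₂) (hY s₃) (hY s₄)
  have hexp (ω : Ω) : (∑ s ∈ I, X s ω) ^ 2 * (∑ s ∈ I, Y s ω) ^ 2 =
      ∑ s₁ ∈ I, ∑ s₂ ∈ I, ∑ s₃ ∈ I, ∑ s₄ ∈ I, X s₁ ω * X s₂ ω * Y s₃ ω * Y s₄ ω := by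
    simp only [← mul_sum, ← sum_mul]; ring
  simp_rw [hexp]
  simp (disch := intros; fun_prop (disch := exact hint ..)) only [integral_finsetSum]

variable {G : Type*} [AddCommGroup G] {X Y : G → Ω → ℝ} {γ₁ γ₂ γ₁₂ : G → ℝ} {κ : G × G × G → ℝ}

lemma integral_mul_mul_mul_eq_cumulant_add
    (hκ : ∀ t s₁ s₂ s₃, κ (s₁, s₂, s₃) =
      (∫ ω, X t ω * X (t + s₁) ω * Y (t + s₂) ω * Y (t + s₃) ω ∂P)
        - γ₁ s₁ * γ₂ (s₃ - s₂) - γ₁₂ s₂ * γ₁₂ (s₃ - s₁) - γ₁₂ s₃ * γ₁₂ (s₂ - s₁))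
    (s₁ s₂ s₃ s₄ : G) :
    ∫ ω, X s₁ ω * X s₂ ω * Y s₃ ω * Y s₄ ω ∂P =
      κ (s₂ - s₁, s₃ - s₁, s₄ - s₁) + γ₁ (s₂ - s₁) * γ₂ (s₄ - s₃)
        + γ₁₂ (s₃ - s₁) * γ₁₂ (s₄ - s₂) + γ₁₂ (s₄ - s₁) * γ₁₂ (s₃ - s₂) := by
  rw [hκ s₁]
  simp only [add_sub_cancel, sub_sub_sub_cancel_right]
  ring

theorem integral_sq_sum_mul_sq_sum_le (hX : ∀ s, MemLp (X s) 4 P) (hY : ∀ s, MemLp (Y s) 4 P)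
    (hκ : ∀ t s₁ s₂ s₃, κ (s₁, s₂, s₃) =
      (∫ ω, X t ω * X (t + s₁) ω * Y (t + s₂) ω * Y (t + s₃) ω ∂P)
        - γ₁ s₁ * γ₂ (s₃ - s₂) - γ₁₂ s₂ * γ₁₂ (s₃ - s₁) - γ₁₂ s₃ * γ₁₂ (s₂ - s₁))
    (hγ₁ : Summable fun t => |γ₁ t|) (hγ₂ : Summable fun t => |γ₂ t|)
    (hγ₁₂ : Summable fun t => |γ₁₂ t|) (hκ_sum : Summable fun u => |κ u|) (I : Finset G) :
    ∫ ω, (∑ s ∈ I, X s ω) ^ 2 * (∑ s ∈ I, Y s ω) ^ 2 ∂P ≤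
      #I ^ 2 * ((∑' t, |γ₁ t|) * ∑' t, |γ₂ t|) + 2 * (#I ^ 2 * (∑' t, |γ₁₂ t|) ^ 2)
        + #I * ∑' u, |κ u| := by
  rw [integral_sq_sum_mul_sq_sum hX hY]
  simp only [integral_mul_mul_mul_eq_cumulant_add hκ, sum_add_distrib]
  -- relabel the time indices so that all three pairings have the shape `f (s₂ - s₁) * g (s₄ - s₃)`
  have h₁₃ : ∑ s₁ ∈ I, ∑ s₂ ∈ I, ∑ s₃ ∈ I, ∑ s₄ ∈ I, γ₁₂ (s₃ - s₁) * γ₁₂ (s₄ - s₂) =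
      ∑ s₁ ∈ I, ∑ s₂ ∈ I, ∑ s₃ ∈ I, ∑ s₄ ∈ I, γ₁₂ (s₂ - s₁) * γ₁₂ (s₄ - s₃) :=
    sum_congr rfl fun _ _ => sum_comm
  have h₁₄ : ∑ s₁ ∈ I, ∑ s₂ ∈ I, ∑ s₃ ∈ I, ∑ s₄ ∈ I, γ₁₂ (s₄ - s₁) * γ₁₂ (s₃ - s₂) =
      ∑ s₁ ∈ I, ∑ s₂ ∈ I, ∑ s₃ ∈ I, ∑ s₄ ∈ I, γ₁₂ (s₂ - s₁) * γ₁₂ (s₄ - s₃) :=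
    sum_congr rfl fun _ _ => (sum_congr rfl fun _ _ => sum_comm).trans sum_comm
  rw [h₁₃, h₁₄]
  linear_combination quadruple_sum_comp_sub_le I hκ_sum
    + quadruple_sum_mul_comp_sub_le I hγ₁ hγ₂ + 2 * quadruple_sum_mul_comp_sub_le I hγ₁₂ hγ₁₂

end Moments

section Parseval

variable {H : Type*} [NormedAddCommGroup H] [InnerProductSpace ℝ H] {ι : Type*} {v : ι → H}

lemma Orthonormal.hasSum_sq_of_hasSum (hv : Orthonormal ℝ v) {a : ι → ℝ} {x : H}
    (hx : HasSum (fun i => a i • v i) x) : HasSum (fun i => a i ^ 2) (‖x‖ ^ 2) := by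
  have hfin (J : Finset ι) : ‖∑ i ∈ J, a i • v i‖ ^ 2 = ∑ i ∈ J, a i ^ 2 := by
    simpa only [LinearIsometry.toSpanSingleton_apply, Real.norm_eq_abs, sq_abs] using
      hv.orthogonalFamily.norm_sum a J
  have hcont : Continuous fun y : H => ‖y‖ ^ 2 := by fun_prop
  simpa only [HasSum, Function.comp_def, hfin] using (hcont.tendsto x).comp hx

lemma Orthonormal.hasSum_sq_sum_of_summable [CompleteSpace H] (hv : Orthonormal ℝ v)
    {σ : Type*} (I : Finset σ) {a : σ → ι → ℝ} (ha : ∀ s ∈ I, Summable fun i => a s i ^ 2) :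
    HasSum (fun i => (∑ s ∈ I, a s i) ^ 2) (‖∑ s ∈ I, ∑' i, a s i • v i‖ ^ 2) := by
  have hsmul (s : σ) (hs : s ∈ I) : Summable fun i => a s i • v i := by
    have := (hv.orthogonalFamily.summable_iff_norm_sq_summable (a s)).2
      (by simpa only [Real.norm_eq_abs, sq_abs] using ha s hs)
    simpa only [LinearIsometry.toSpanSingleton_apply] using this
  rw [← Summable.tsum_finsetSum hsmul]
  simp only [← sum_smul]
  exact hv.hasSum_sq_of_hasSum (summable_sum hsmul |>.congr fun i => sum_smul.symm).hasSum

end Parseval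

section FourthMoment

variable {Ω : Type*} [MeasurableSpace Ω] {P : Measure Ω} {ι : Type*} [Countable ι]

lemma ae_summable_of_summable_integral_norm {E : Type*} [NormedAddCommGroup E] [CompleteSpace E]
    {f : ι → Ω → E} (hf : ∀ i, Integrable (f i) P)
    (hs : Summable fun i => ∫ ω, ‖f i ω‖ ∂P) : ∀ᵐ ω ∂P, Summable fun i => f i ω := by
  have hL1 : ∑' i, eLpNorm (f i) 1 P ≠ ⊤ := by
    simp only [eLpNorm_one_eq_lintegral_enorm, ← ofReal_integral_norm_eq_lintegral_enorm (hf _)]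
    rw [← ENNReal.ofReal_tsum_of_nonneg (fun i => integral_nonneg fun _ => norm_nonneg _) hs]
    exact ENNReal.ofReal_ne_top
  filter_upwards [summable_norm_of_tsum_eLpNorm_ne_top le_rfl (fun i => (hf i).1) hL1]
    with ω h using h.of_norm

lemma ae_summable_sq_of_summable_integral_sq {X : ι → Ω → ℝ} (hX : ∀ i, MemLp (X i) 2 P)
    (hs : Summable fun i => ∫ ω, X i ω ^ 2 ∂P) : ∀ᵐ ω ∂P, Summable fun i => X i ω ^ 2 :=
  ae_summable_of_summable_integral_norm (fun i => (hX i).integrable_sq) <| by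
    simpa only [norm_pow, Real.norm_eq_abs, sq_abs] using hs

variable {H : Type*} [NormedAddCommGroup H] [InnerProductSpace ℝ H] [CompleteSpace H]
  {v : ι → H}

theorem integral_norm_sum_tsum_smul_pow_four (hv : Orthonormal ℝ v) {σ : Type*} (I : Finset σ)
    {X : ι → σ → Ω → ℝ} (hX : ∀ i s, MemLp (X i s) 4 P)
    (hsq : ∀ s ∈ I, ∀ᵐ ω ∂P, Summable fun i => X i s ω ^ 2)
    (hsum : Summable fun p : ι × ι =>
      ∫ ω, (∑ s ∈ I, X p.1 s ω) ^ 2 * (∑ s ∈ I, X p.2 s ω) ^ 2 ∂P) :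
    ∫ ω, ‖∑ s ∈ I, ∑' i, X i s ω • v i‖ ^ 4 ∂P =
      ∑' p : ι × ι, ∫ ω, (∑ s ∈ I, X p.1 s ω) ^ 2 * (∑ s ∈ I, X p.2 s ω) ^ 2 ∂P := by
  have hae : ∀ᵐ ω ∂P, ‖∑ s ∈ I, ∑' i, X i s ω • v i‖ ^ 4 =
      ∑' p : ι × ι, (∑ s ∈ I, X p.1 s ω) ^ 2 * (∑ s ∈ I, X p.2 s ω) ^ 2 := by
    filter_upwards [(Filter.eventually_all_finset I).2 hsq] with ω hω
    have h := hv.hasSum_sq_sum_of_summable I hω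
    rw [show 4 = 2 * 2 from rfl, pow_mul', ← h.tsum_eq, sq]
    exact h.summable.tsum_mul_tsum h.summable
      (h.summable.mul_of_nonneg h.summable (fun _ => sq_nonneg _) fun _ => sq_nonneg _)
  have hint (p : ι × ι) :
      Integrable (fun ω => (∑ s ∈ I, X p.1 s ω) ^ 2 * (∑ s ∈ I, X p.2 s ω) ^ 2) P :=
    integrable_sq_mul_sq_of_memLp_four (memLp_finsetSum I fun s _ => hX p.1 s)
      (memLp_finsetSum I fun s _ => hX p.2 s)
  rw [integral_congr_ae hae, ← integral_tsum_of_summable_integral_norm hint]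
  simpa only [norm_mul, norm_pow, Real.norm_eq_abs, sq_abs] using hsum

variable [IsFiniteMeasure P] {G : Type*} [AddCommGroup G] {ξ : ι → G → Ω → ℝ}
  {γ : ι → ι → G → ℝ} {cum : ι → ι → G → G → G → ℝ}

theorem integral_norm_sum_tsum_smul_pow_four_le (hv : Orthonormal ℝ v) (I : Finset G)
    (hL4 : ∀ i s, MemLp (ξ i s) 4 P)
    (hγ : ∀ i j s h, ∫ ω, ξ i s ω * ξ j (s + h) ω ∂P = γ i j h)
    (hcum : ∀ i j t s₁ s₂ s₃, cum i j s₁ s₂ s₃ =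
      (∫ ω, ξ i t ω * ξ i (t + s₁) ω * ξ j (t + s₂) ω * ξ j (t + s₃) ω ∂P)
        - γ i i s₁ * γ j j (s₃ - s₂) - γ i j s₂ * γ i j (s₃ - s₁) - γ i j s₃ * γ i j (s₂ - s₁))
    (hγ_diag : Summable fun p : ι × G => |γ p.1 p.1 p.2|)
    (hγ_sum : ∀ i j, Summable fun h => |γ i j h|)
    (hγ_sq : Summable fun q : ι × ι => (∑' h, |γ q.1 q.2 h|) ^ 2)
    (hcum_sum : Summable fun q : (ι × ι) × (G × G × G) =>
      |cum q.1.1 q.1.2 q.2.1 q.2.2.1 q.2.2.2|) :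
    ∫ ω, ‖∑ s ∈ I, ∑' i, ξ i s ω • v i‖ ^ 4 ∂P ≤
      #I ^ 2 * (∑' i, ∑' h, |γ i i h|) ^ 2 + 2 * (#I ^ 2 * ∑' q : ι × ι, (∑' h, |γ q.1 q.2 h|) ^ 2)
        + #I * ∑' q : (ι × ι) × (G × G × G), |cum q.1.1 q.1.2 q.2.1 q.2.2.1 q.2.2.2| := by
  have hΓ := ((summable_prod_of_nonneg fun _ => abs_nonneg _).mp hγ_diag).2
  have hΓ₀ : 0 ≤ fun i => ∑' h, |γ i i h| := fun _ => tsum_nonneg fun _ => abs_nonneg _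
  have hK := (summable_prod_of_nonneg fun _ => abs_nonneg _).mp hcum_sum
  have hpair (p : ι × ι) :
      ∫ ω, (∑ s ∈ I, ξ p.1 s ω) ^ 2 * (∑ s ∈ I, ξ p.2 s ω) ^ 2 ∂P ≤
        #I ^ 2 * ((∑' h, |γ p.1 p.1 h|) * ∑' h, |γ p.2 p.2 h|)
          + 2 * (#I ^ 2 * (∑' h, |γ p.1 p.2 h|) ^ 2)
          + #I * ∑' u : G × G × G, |cum p.1 p.2 u.1 u.2.1 u.2.2| :=
    integral_sq_sum_mul_sq_sum_le (κ := fun u => cum p.1 p.2 u.1 u.2.1 u.2.2) (hL4 _) (hL4 _)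
      (hcum p.1 p.2) (hγ_sum _ _) (hγ_sum _ _) (hγ_sum _ _) (hK.1 p) I
  -- the per-pair bounds of `hpair` sum to the right-hand side
  have hbound := (((hΓ.hasSum.mul hΓ.hasSum (hΓ.mul_of_nonneg hΓ hΓ₀ hΓ₀)).mul_left
    ((#I : ℝ) ^ 2)).add ((hγ_sq.hasSum.mul_left ((#I : ℝ) ^ 2)).mul_left 2)).add
    ((hcum_sum.hasSum.prod_fiberwise fun p => (hK.1 p).hasSum).mul_left (#I : ℝ))
  have hsq (s : G) : ∀ᵐ ω ∂P, Summable fun i => ξ i s ω ^ 2 := by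
    refine ae_summable_sq_of_summable_integral_sq
      (fun i => (hL4 i s).mono_exponent (by norm_num)) (Summable.of_abs ?_)
    -- `∫ ω, ξ i s ω ^ 2 ∂P = γ i i 0`, summable over `i` by `hγ_diag` at lag `0`
    convert hγ_diag.comp_injective (i := fun i => (i, 0)) fun _ _ h => (Prod.ext_iff.mp h).1
      using 3 with i
    simpa [sq] using congrArg abs (hγ i i s 0)
  have hF := hbound.summable.of_nonneg_of_le
    (fun p => integral_nonneg fun _ => by positivity) hpair
  rw [integral_norm_sum_tsum_smul_pow_four hv I hL4 (fun s _ => hsq s) hF,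
    sq (∑' i, ∑' h, |γ i i h|)]
  exact hasSum_le hpair hF.hasSum hbound

end FourthMoment

theorem fourth_moment_bound_tail_scores_general
    {Ω : Type*} [MeasurableSpace Ω] (P : Measure Ω) [IsProbabilityMeasure P]
    {H : Type*} [NormedAddCommGroup H] [InnerProductSpace ℝ H] [CompleteSpace H]
    (v : ℕ → H) (hv : Orthonormal ℝ v)
    (ξ : ℕ → ℤ → Ω → ℝ)
    (hL4 : ∀ l s, MemLp (ξ l s) 4 P)
    (γ : ℕ → ℕ → ℤ → ℝ)
    (hγ : ∀ l₁ l₂ (s h : ℤ), (∫ ω, ξ l₁ s ω * ξ l₂ (s + h) ω ∂P) = γ l₁ l₂ h)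
    (cum : ℕ → ℕ → ℤ → ℤ → ℤ → ℝ)
    (hcum : ∀ l₁ l₂ (t s₁ s₂ s₃ : ℤ), cum l₁ l₂ s₁ s₂ s₃ =
      (∫ ω, ξ l₁ t ω * ξ l₁ (t + s₁) ω * ξ l₂ (t + s₂) ω * ξ l₂ (t + s₃) ω ∂P)
        - γ l₁ l₁ s₁ * γ l₂ l₂ (s₃ - s₂)
        - γ l₁ l₂ s₂ * γ l₁ l₂ (s₃ - s₁)
        - γ l₁ l₂ s₃ * γ l₁ l₂ (s₂ - s₁))
    (m : ℕ)
    -- summability of covariances and fourth-order cumulants over the tail indices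
    (hsum1 : Summable fun p : {l : ℕ // m < l} × ℤ => |γ p.1 p.1 p.2|)
    (hsum2 : ∀ l₁ l₂ : ℕ, Summable fun h : ℤ => |γ l₁ l₂ h|)
    (hsum3 : Summable fun q : {l : ℕ // m < l} × {l : ℕ // m < l} =>
      (∑' h : ℤ, |γ q.1.1 q.2.1 h|) ^ 2)
    (hsum4 : Summable fun q : ({l : ℕ // m < l} × {l : ℕ // m < l}) × (ℤ × ℤ × ℤ) =>
      |cum q.1.1.1 q.1.2.1 q.2.1 q.2.2.1 q.2.2.2|)
    (C : ℝ)
    (hC : C = ∑' q : ({l : ℕ // m < l} × {l : ℕ // m < l}) × (ℤ × ℤ × ℤ),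
      |cum q.1.1.1 q.1.2.1 q.2.1 q.2.2.1 q.2.2.2|)
    (a : ℤ) (n : ℕ) (hn : 1 ≤ n) :
    (1 / (n : ℝ) ^ 2) *
        (∫ ω, ‖∑ s ∈ Finset.Icc (a + 1) (a + n),
          ∑' l : {l : ℕ // m < l}, ξ l.1 s ω • v l.1‖ ^ 4 ∂P) ≤
      (∑' l : {l : ℕ // m < l}, ∑' h : ℤ, |γ l.1 l.1 h|) ^ 2 +
        2 * (∑' q : {l : ℕ // m < l} × {l : ℕ // m < l},
          (∑' h : ℤ, |γ q.1.1 q.2.1 h|) ^ 2) +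
        C / n := by
  have hcard : (#(Icc (a + 1) (a + n)) : ℝ) = n := by simp
  have h := integral_norm_sum_tsum_smul_pow_four_le (ξ := fun l : {l : ℕ // m < l} => ξ l)
    (γ := fun l₁ l₂ => γ l₁ l₂) (cum := fun l₁ l₂ => cum l₁ l₂) (hv.comp _ Subtype.val_injective)
    (Icc (a + 1) (a + n)) (fun l => hL4 l) (fun l₁ l₂ => hγ l₁ l₂) (fun l₁ l₂ => hcum l₁ l₂) hsum1
    (fun l₁ l₂ => hsum2 l₁ l₂) hsum3 hsum4
  rw [hcard, ← hC] at h
  rw [one_div, inv_mul_le_iff₀ (by positivity)]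
  refine h.trans_eq ?_
  field_simp

/-- Fourth-moment bound for Hilbert-space partial sums of score processes.
`ξ l s` are real mean-zero random variables, stationary with cross-covariances
`γ l₁ l₂ h = Cov(ξ_{l₁,0}, ξ_{l₂,h})` and (stationary) fourth-order cumulants
`cum l₁ l₂ s₁ s₂ s₃ = cum(ξ_{l₁,0}, ξ_{l₁,s₁}, ξ_{l₂,s₂}, ξ_{l₂,s₃})`, and `(v l)`
is an orthonormal system in a Hilbert space.  Then
`n⁻²𝔼‖∑_{s=a+1}^{a+n} ∑_{l>m} ξ_{l,s} v_l‖⁴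
  ≤ (∑_{l>m} ∑_h |γ_l(h)|)² + 2 ∑_{l₁,l₂>m} (∑_h |γ_{l₁,l₂}(h)|)² + C/n`. -/
theorem fourth_moment_bound_tail_scores
    {Ω : Type*} [MeasurableSpace Ω] (P : Measure Ω) [IsProbabilityMeasure P]
    {H : Type*} [NormedAddCommGroup H] [InnerProductSpace ℝ H] [CompleteSpace H]
    (v : ℕ → H) (hv : Orthonormal ℝ v)
    (ξ : ℕ → ℤ → Ω → ℝ)
    (hmean : ∀ l s, (∫ ω, ξ l s ω ∂P) = 0)
    (hL4 : ∀ l s, MemLp (ξ l s) 4 P)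
    (γ : ℕ → ℕ → ℤ → ℝ)
    (hγ : ∀ l₁ l₂ (s h : ℤ), (∫ ω, ξ l₁ s ω * ξ l₂ (s + h) ω ∂P) = γ l₁ l₂ h)
    (cum : ℕ → ℕ → ℤ → ℤ → ℤ → ℝ)
    (hcum : ∀ l₁ l₂ (t s₁ s₂ s₃ : ℤ), cum l₁ l₂ s₁ s₂ s₃ =
      (∫ ω, ξ l₁ t ω * ξ l₁ (t + s₁) ω * ξ l₂ (t + s₂) ω * ξ l₂ (t + s₃) ω ∂P)
        - γ l₁ l₁ s₁ * γ l₂ l₂ (s₃ - s₂)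
        - γ l₁ l₂ s₂ * γ l₁ l₂ (s₃ - s₁)
        - γ l₁ l₂ s₃ * γ l₁ l₂ (s₂ - s₁))
    (m : ℕ)
    -- summability of covariances and fourth-order cumulants over the tail indices
    (hsum1 : Summable fun p : {l : ℕ // m < l} × ℤ => |γ p.1 p.1 p.2|)
    (hsum2 : ∀ l₁ l₂ : ℕ, Summable fun h : ℤ => |γ l₁ l₂ h|)
    (hsum3 : Summable fun q : {l : ℕ // m < l} × {l : ℕ // m < l} =>
      (∑' h : ℤ, |γ q.1.1 q.2.1 h|) ^ 2)
    (hsum4 : Summable fun q : ({l : ℕ // m < l} × {l : ℕ // m < l}) × (ℤ × ℤ × ℤ) =>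
      |cum q.1.1.1 q.1.2.1 q.2.1 q.2.2.1 q.2.2.2|)
    (C : ℝ)
    (hC : C = ∑' q : ({l : ℕ // m < l} × {l : ℕ // m < l}) × (ℤ × ℤ × ℤ),
      |cum q.1.1.1 q.1.2.1 q.2.1 q.2.2.1 q.2.2.2|)
    (a : ℤ) (n : ℕ) (hn : 1 ≤ n) :
    (1 / (n : ℝ) ^ 2) *
        (∫ ω, ‖∑ s ∈ Finset.Icc (a + 1) (a + n),
          ∑' l : {l : ℕ // m < l}, ξ l.1 s ω • v l.1‖ ^ 4 ∂P) ≤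
      (∑' l : {l : ℕ // m < l}, ∑' h : ℤ, |γ l.1 l.1 h|) ^ 2 +
        2 * (∑' q : {l : ℕ // m < l} × {l : ℕ // m < l},
          (∑' h : ℤ, |γ q.1.1 q.2.1 h|) ^ 2) +
        C / n :=
  fourth_moment_bound_tail_scores_general P v hv ξ hL4 γ hγ cum hcum m hsum1 hsum2 hsum3 hsum4 C hC
    a n hn
end
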